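/- Let θ = Θ_S ∘ Λ_{π,t} be an automorphism of B_k and let σ_θ be the permutation of {1,…,2^k} such that (Φ_k(θ(a)))_i = ((Φ_k(a))_{σ_θ^{−1}(i)})^{p^t} for all a ∈ B_k. Then a B_k-submodule C of B_k^n is a Euclidean self-dual θ-cyclic code of length n if and only if there exist Euclidean self-dual F_{p^r}-linear codes C_1,…,C_{2^k} ⊆ F_{p^r}^n such that C = Ψ̄_k^{−1}(C_1,…,C_{2^k}) and T_{φ^t}(C_i) ⊆ C_{σ_θ(i)} for every i, where φ is the Frobenius α ↦ α^p of F_{p^r} and T_{φ^t}(c_0,…,c_{n−1}) = (φ^t(c_{n−1}), φ^t(c_0), …, φ^t(c_{n−2})). -/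

import Mathlib

open MvPolynomial

set_option synthInstance.maxHeartbeats 400000
set_option maxHeartbeats 1000000

noncomputable def relIdeal (p r k : ℕ) [Fact p.Prime] : Ideal (MvPolynomial (Fin k) (GaloisField p r)) :=
  Ideal.span (Set.range fun i : Fin k => X i ^ 2 - X i)

abbrev B (p r k : ℕ) [Fact p.Prime] :=
  MvPolynomial (Fin k) (GaloisField p r) ⧸ relIdeal p r k

noncomputable def v (p r k : ℕ) [Fact p.Prime] (i : Fin k) : B p r k :=
  Ideal.Quotient.mk _ (X i)

lemma v_idem (p r k : ℕ) [Fact p.Prime] (i : Fin k) : v p r k i ^ 2 = v p r k i := by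
  have h : (X i ^ 2 - X i : MvPolynomial (Fin k) (GaloisField p r)) ∈ relIdeal p r k :=
    Ideal.subset_span ⟨i, rfl⟩
  have h2 := (Ideal.Quotient.eq_zero_iff_mem).mpr h
  rw [map_sub, map_pow] at h2
  have h3 := sub_eq_zero.mp h2
  simpa [v] using h3

lemma one_sub_v_idem (p r k : ℕ) [Fact p.Prime] (i : Fin k) :
    (1 - v p r k i) ^ 2 = 1 - v p r k i := by
  have h : (1 - v p r k i) ^ 2 = 1 - 2 * v p r k i + v p r k i ^ 2 := by ring
  rw [h, v_idem]; ring

noncomputable def ThAux (p r k : ℕ) [Fact p.Prime] (S : Finset (Fin k)) :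
    MvPolynomial (Fin k) (GaloisField p r) →+* B p r k :=
  (aeval (fun i : Fin k => if i ∈ S then 1 - v p r k i else v p r k i)).toRingHom

lemma ThAux_cond (p r k : ℕ) [Fact p.Prime] (S : Finset (Fin k)) :
    relIdeal p r k ≤ RingHom.ker (ThAux p r k S) := by
  refine Ideal.span_le.mpr ?_
  rintro _ ⟨i, rfl⟩
  simp only [SetLike.mem_coe, RingHom.mem_ker, ThAux, AlgHom.toRingHom_eq_coe,
    RingHom.coe_coe, map_sub, map_pow, aeval_X]
  by_cases h : i ∈ S
  · rw [if_pos h, one_sub_v_idem, sub_self]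
  · rw [if_neg h, v_idem, sub_self]

/-- The automorphism `Θ_S` of `B_k`, determined by `v_i ↦ 1 - v_i` for `i ∈ S` and
`v_i ↦ v_i` otherwise, fixing `F_{p^r}` pointwise. -/
noncomputable def Th (p r k : ℕ) [Fact p.Prime] (S : Finset (Fin k)) :
    B p r k →+* B p r k :=
  Ideal.Quotient.lift (relIdeal p r k) (ThAux p r k S) (fun _ ha => ThAux_cond p r k S ha)

noncomputable def LamAux (p r k : ℕ) [Fact p.Prime] (π : Equiv.Perm (Fin k)) (t : ℕ) :
    MvPolynomial (Fin k) (GaloisField p r) →+* B p r k :=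
  eval₂Hom ((Ideal.Quotient.mk (relIdeal p r k)).comp
      ((C : GaloisField p r →+* MvPolynomial (Fin k) (GaloisField p r)).comp
        (iterateFrobenius (GaloisField p r) p t)))
    (fun i => v p r k (π i))

lemma LamAux_cond (p r k : ℕ) [Fact p.Prime] (π : Equiv.Perm (Fin k)) (t : ℕ) :
    relIdeal p r k ≤ RingHom.ker (LamAux p r k π t) := by
  refine Ideal.span_le.mpr ?_
  rintro _ ⟨i, rfl⟩
  simp only [SetLike.mem_coe, RingHom.mem_ker, LamAux, map_sub, map_pow, eval₂Hom_X']
  rw [v_idem, sub_self]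

/-- The automorphism `Λ_{π,t}` of `B_k`, acting on `F_{p^r}` as the Frobenius power
`α ↦ α^{p^t}` and sending `v_i ↦ v_{π(i)}`. -/
noncomputable def Lam (p r k : ℕ) [Fact p.Prime] (π : Equiv.Perm (Fin k)) (t : ℕ) :
    B p r k →+* B p r k :=
  Ideal.Quotient.lift (relIdeal p r k) (LamAux p r k π t) (fun _ ha => LamAux_cond p r k π t ha)

noncomputable def PhiAux (p r k : ℕ) [Fact p.Prime] :
    MvPolynomial (Fin k) (GaloisField p r) →+* (Fin (2 ^ k) → GaloisField p r) :=
  Pi.ringHom fun j =>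
    eval₂Hom (RingHom.id (GaloisField p r))
      (fun i : Fin k => if Nat.testBit (j : ℕ) (i : ℕ) then 1 else 0)

lemma PhiAux_cond (p r k : ℕ) [Fact p.Prime] :
    relIdeal p r k ≤ RingHom.ker (PhiAux p r k) := by
  refine Ideal.span_le.mpr ?_
  rintro _ ⟨i, rfl⟩
  simp only [SetLike.mem_coe, RingHom.mem_ker, PhiAux]
  funext j
  simp only [Pi.ringHom, RingHom.pi_apply, map_sub, map_pow, eval₂Hom_X']
  by_cases h : Nat.testBit (j : ℕ) (i : ℕ) <;> simp [h]

/-- The Gray map `Φ_k : B_k → F_{p^r}^{2^k}`: the coordinate indexed by `j` is the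
evaluation of (a representative of) an element of `B_k` at the point whose `i`-th
coordinate is the `i`-th binary digit of `j`.  This agrees with the recursive
definition `Φ_k(α + β v_k) = (Φ_{k-1}(α), Φ_{k-1}(α + β))`, `Φ_0 = id`. -/
noncomputable def Phi (p r k : ℕ) [Fact p.Prime] :
    B p r k →+* (Fin (2 ^ k) → GaloisField p r) :=
  Ideal.Quotient.lift (relIdeal p r k) (PhiAux p r k) (fun _ ha => PhiAux_cond p r k ha)


/-!
The Gray map is a ring isomorphism `B_k ≃ F^{2^k}`: coordinate `j` is evaluation at the binary
digits of `j`, and its inverse sends the `j`-th standard idempotent to the product of the `v_i`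
and `1 - v_i` selected by those digits. Over a product ring `∏ᵢ F` a code is the product of its
component codes `Cᵢ`, the Euclidean form is computed componentwise, and an automorphism acting on
the components by a permutation `σ` and a map `φ` carries `Cᵢ` into `C_{σ i}`. Self-duality and
`θ`-cyclicity of `C` therefore become self-duality of each `Cᵢ` and `T_φ(Cᵢ) ⊆ C_{σ i}`.
-/

section ComponentCodes

variable {R F ι κ : Type*} [Semiring R] [Semiring F] (Φ : R ≃+* (ι → F))

def IsSelfDual {A : Type*} [Semiring A] [Fintype κ] (C : Submodule A (κ → A)) : Prop :=
  (C : Set (κ → A)) = {b | ∀ c ∈ C, ∑ j, b j * c j = 0}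

def componentCode (C : Submodule R (κ → R)) (i : ι) : Submodule F (κ → F) where
  carrier := {f | ∃ c ∈ C, (fun b => Φ (c b) i) = f}
  add_mem' := by
    rintro _ _ ⟨c, hc, rfl⟩ ⟨d, hd, rfl⟩
    exact ⟨c + d, C.add_mem hc hd, by ext; simp⟩
  zero_mem' := ⟨0, C.zero_mem, by ext; simp⟩
  smul_mem' := by
    rintro α _ ⟨c, hc, rfl⟩
    exact ⟨Φ.symm (fun _ => α) • c, C.smul_mem _ hc, by ext; simp⟩

def ofComponent [DecidableEq ι] (i : ι) (f : κ → F) : κ → R :=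
  fun b => Φ.symm (Pi.single i (f b))

lemma component_ofComponent [DecidableEq ι] (i j : ι) (f : κ → F) :
    (fun b => Φ (ofComponent Φ i f b) j) = (Pi.single i f : ι → κ → F) j := by
  funext b
  by_cases h : j = i <;> simp [ofComponent, h]

variable {C : Submodule R (κ → R)}

lemma mem_componentCode_of_mem {a : κ → R} (ha : a ∈ C) (i : ι) :
    (fun b => Φ (a b) i) ∈ componentCode Φ C i :=
  ⟨a, ha, rfl⟩

variable {Φ} in
lemma ofComponent_mem [DecidableEq ι] {i : ι} {f : κ → F} (hf : f ∈ componentCode Φ C i) :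
    ofComponent Φ i f ∈ C := by
  obtain ⟨c, hc, rfl⟩ := hf
  convert C.smul_mem (Φ.symm (Pi.single i 1)) hc using 1
  funext b
  apply Φ.injective
  simp [ofComponent, ← Pi.single_mul_left]

variable {Φ} in
lemma mem_componentCode_iff_ofComponent_mem [DecidableEq ι] {i : ι} {f : κ → F} :
    f ∈ componentCode Φ C i ↔ ofComponent Φ i f ∈ C := by
  refine ⟨ofComponent_mem, fun h => ?_⟩
  simpa [component_ofComponent] using mem_componentCode_of_mem Φ h i

lemma mem_iff_forall_mem_componentCode [Fintype ι] [DecidableEq ι] {a : κ → R} :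
    a ∈ C ↔ ∀ i, (fun b => Φ (a b) i) ∈ componentCode Φ C i := by
  refine ⟨fun ha i => mem_componentCode_of_mem Φ ha i, fun h => ?_⟩
  have hsum : a = ∑ i, ofComponent Φ i (fun b => Φ (a b) i) := by
    funext b
    apply Φ.injective
    simp [ofComponent, Finset.univ_sum_single]
  rw [hsum]
  exact C.sum_mem fun i _ => ofComponent_mem (h i)

lemma componentCode_eq_of_coe_eq [DecidableEq ι] {D : ι → Submodule F (κ → F)}
    (hC : (C : Set (κ → R)) = {a | ∀ i, (fun b => Φ (a b) i) ∈ D i}) :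
    componentCode Φ C = D := by
  have mem_C (a : κ → R) : a ∈ C ↔ ∀ i, (fun b => Φ (a b) i) ∈ D i := Set.ext_iff.mp hC a
  funext i
  ext f
  rw [mem_componentCode_iff_ofComponent_mem, mem_C]
  simp_rw [component_ofComponent]
  refine ⟨fun h => by simpa using h i, fun hf j => ?_⟩
  by_cases h : j = i
  · subst h; simpa using hf
  · simp [h]

lemma sum_mul_eq_zero_iff_forall_component [Fintype κ] (x y : κ → R) :
    ∑ b, x b * y b = 0 ↔ ∀ i, ∑ b, Φ (x b) i * Φ (y b) i = 0 := by
  rw [← Φ.injective.eq_iff, map_zero, funext_iff]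
  simp

lemma forall_sum_mul_eq_zero_iff_componentCode [Fintype κ] (a : κ → R) :
    (∀ c ∈ C, ∑ b, a b * c b = 0) ↔
      ∀ i, ∀ f ∈ componentCode Φ C i, ∑ b, Φ (a b) i * f b = 0 := by
  simp_rw [sum_mul_eq_zero_iff_forall_component Φ]
  constructor
  · rintro h i _ ⟨c, hc, rfl⟩
    exact h c hc i
  · exact fun h c hc i => h i _ (mem_componentCode_of_mem Φ hc i)

lemma isSelfDual_iff_forall_componentCode [Fintype ι] [DecidableEq ι] [Fintype κ] :
    IsSelfDual C ↔ ∀ i, IsSelfDual (componentCode Φ C i) := by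
  simp only [IsSelfDual, Set.ext_iff, SetLike.mem_coe, Set.mem_ofPred_eq]
  constructor
  · intro hC i f
    constructor
    · rintro ⟨a, ha, rfl⟩
      exact (forall_sum_mul_eq_zero_iff_componentCode Φ a).mp ((hC a).mp ha) i
    · intro hf
      rw [mem_componentCode_iff_ofComponent_mem, hC, forall_sum_mul_eq_zero_iff_componentCode Φ]
      intro j g hg
      by_cases h : j = i
      · subst h; simpa [ofComponent] using hf g hg
      · simp [ofComponent, h]
  · intro hD a
    rw [mem_iff_forall_mem_componentCode Φ, forall_sum_mul_eq_zero_iff_componentCode Φ]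
    exact forall_congr' fun i => hD i _

variable {Φ} in
lemma twistedCyclic_iff_forall_componentCode [Fintype ι] [DecidableEq ι] (θ : R → R)
    (φ : F → F) (s : κ → κ) (σ : Equiv.Perm ι) (hσ : ∀ a i, Φ (θ a) i = φ (Φ a (σ.symm i))) :
    (∀ c ∈ C, (fun b => θ (c (s b))) ∈ C) ↔
      ∀ i, ∀ f ∈ componentCode Φ C i, (fun b => φ (f (s b))) ∈ componentCode Φ C (σ i) := by
  constructor
  · rintro h i _ ⟨c, hc, rfl⟩
    simpa [hσ] using mem_componentCode_of_mem Φ (h c hc) (σ i)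
  · intro h c hc
    refine (mem_iff_forall_mem_componentCode Φ).mpr fun i => ?_
    simpa [hσ] using h (σ.symm i) _ (mem_componentCode_of_mem Φ hc (σ.symm i))

end ComponentCodes

lemma Fin.eq_iff_forall_testBit {k : ℕ} {j j' : Fin (2 ^ k)} :
    j = j' ↔ ∀ i : Fin k, (j : ℕ).testBit i = (j' : ℕ).testBit i := by
  refine ⟨fun h _ => h ▸ rfl, fun h => Fin.ext (Nat.eq_of_testBit_eq fun m => ?_)⟩
  by_cases hm : m < k
  · exact h ⟨m, hm⟩
  · have hk : 2 ^ k ≤ 2 ^ m := Nat.pow_le_pow_right two_pos (not_lt.mp hm)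
    rw [Nat.testBit_lt_two_pow (j.isLt.trans_le hk), Nat.testBit_lt_two_pow (j'.isLt.trans_le hk)]

lemma testBit_finFunctionFinEquiv {k : ℕ} (g : Fin k → Fin 2) (i : Fin k) :
    (finFunctionFinEquiv g : ℕ).testBit i = decide (g i = 1) := by
  have hg := finFunctionFinEquiv_symm_apply_val (finFunctionFinEquiv g) i
  rw [Equiv.symm_apply_apply] at hg
  rw [Nat.testBit_eq_decide_div_mod_eq, ← hg]
  simp [Fin.ext_iff]

section GrayMap

variable (p r k : ℕ) [Fact p.Prime]

lemma Phi_mk_apply (q : MvPolynomial (Fin k) (GaloisField p r)) (j : Fin (2 ^ k)) :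
    Phi p r k (Ideal.Quotient.mk _ q) j =
      eval (fun i : Fin k => if (j : ℕ).testBit i then 1 else 0) q :=
  rfl

lemma Phi_algebraMap (α : GaloisField p r) :
    Phi p r k (algebraMap (GaloisField p r) (B p r k) α) = fun _ => α := by
  ext j
  rw [← Ideal.Quotient.mk_algebraMap, Phi_mk_apply, MvPolynomial.algebraMap_eq, eval_C]

lemma Phi_v (i : Fin k) (j : Fin (2 ^ k)) :
    Phi p r k (v p r k i) j = if (j : ℕ).testBit i then 1 else 0 := by
  rw [v, Phi_mk_apply, eval_X]

noncomputable def grayIdempotent (j : Fin (2 ^ k)) : B p r k :=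
  ∏ i : Fin k, if (j : ℕ).testBit i then v p r k i else 1 - v p r k i

lemma Phi_grayIdempotent (j : Fin (2 ^ k)) :
    Phi p r k (grayIdempotent p r k j) = Pi.single j 1 := by
  ext j'
  have hfactor (i : Fin k) :
      Phi p r k (if (j : ℕ).testBit i then v p r k i else 1 - v p r k i) j' =
        if (j' : ℕ).testBit i = (j : ℕ).testBit i then 1 else 0 := by
    by_cases hj : (j : ℕ).testBit i <;> by_cases hj' : (j' : ℕ).testBit i <;>
      simp [Phi_v, hj, hj']
  simp_rw [grayIdempotent, map_prod, Finset.prod_apply, hfactor, Fintype.prod_boole,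
    ← Fin.eq_iff_forall_testBit, Pi.single_apply]

lemma sum_grayIdempotent : ∑ j, grayIdempotent p r k j = 1 := by
  calc ∑ j, grayIdempotent p r k j
      = ∏ i : Fin k, ∑ x : Fin 2, if x = 1 then v p r k i else 1 - v p r k i := by
        rw [Fintype.prod_sum, ← finFunctionFinEquiv.sum_comp]
        simp_rw [grayIdempotent, testBit_finFunctionFinEquiv, decide_eq_true_eq]
    _ = 1 := by simp [Fin.sum_univ_two]

lemma v_mul_grayIdempotent (i : Fin k) (j : Fin (2 ^ k)) :
    v p r k i * grayIdempotent p r k j =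
      algebraMap _ _ (Phi p r k (v p r k i) j) * grayIdempotent p r k j := by
  rw [grayIdempotent, Fintype.prod_eq_mul_prod_compl i, ← mul_assoc, ← mul_assoc, Phi_v]
  have hv := v_idem p r k i
  cases (j : ℕ).testBit i
  · simp [mul_sub, ← sq, hv]
  · simp [← sq, hv]

lemma mul_grayIdempotent (a : B p r k) (j : Fin (2 ^ k)) :
    a * grayIdempotent p r k j = algebraMap _ _ (Phi p r k a j) * grayIdempotent p r k j := by
  obtain ⟨q, rfl⟩ := Ideal.Quotient.mk_surjective a
  induction q using MvPolynomial.induction_on with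
  | C α =>
    rw [← MvPolynomial.algebraMap_eq, Ideal.Quotient.mk_algebraMap, Phi_algebraMap]
  | add f g hf hg => rw [map_add, add_mul, hf, hg, map_add, Pi.add_apply, map_add, add_mul]
  | mul_X f i hf =>
    have hmk : Ideal.Quotient.mk (relIdeal p r k) (f * X i) =
        Ideal.Quotient.mk _ f * v p r k i := map_mul _ _ _
    rw [hmk, mul_assoc, v_mul_grayIdempotent, mul_left_comm, hf, ← mul_assoc, ← map_mul,
      map_mul (Phi p r k), Pi.mul_apply, mul_comm (Phi p r k (v p r k i) j)]

lemma eq_sum_algebraMap_Phi_mul_grayIdempotent (a : B p r k) :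
    a = ∑ j, algebraMap _ _ (Phi p r k a j) * grayIdempotent p r k j := by
  conv_lhs => rw [← mul_one a, ← sum_grayIdempotent p r k, Finset.mul_sum]
  exact Finset.sum_congr rfl fun j _ => mul_grayIdempotent p r k a j

lemma Phi_bijective : Function.Bijective (Phi p r k) := by
  refine ⟨fun a b h => ?_, fun f => ⟨∑ j, algebraMap _ _ (f j) * grayIdempotent p r k j, ?_⟩⟩
  · rw [eq_sum_algebraMap_Phi_mul_grayIdempotent p r k a,
      eq_sum_algebraMap_Phi_mul_grayIdempotent p r k b, h]
  · ext j'
    simp [Phi_algebraMap, Phi_grayIdempotent, Finset.sum_apply, Pi.single_apply]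

end GrayMap

theorem isSelfDual_twistedCyclic_iff_exists {R F ι κ : Type*} [Semiring R] [Semiring F]
    [Fintype ι] [DecidableEq ι] [Fintype κ] (Φ : R ≃+* (ι → F)) (θ : R → R) (φ : F → F)
    (s : κ → κ) (σ : Equiv.Perm ι) (hσ : ∀ a i, Φ (θ a) i = φ (Φ a (σ.symm i)))
    (C : Submodule R (κ → R)) :
    ((∀ c ∈ C, (fun b => θ (c (s b))) ∈ C) ∧ IsSelfDual C) ↔
      ∃ D : ι → Submodule F (κ → F),
        (C : Set (κ → R)) = {a | ∀ i, (fun b => Φ (a b) i) ∈ D i} ∧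
        (∀ i, IsSelfDual (D i)) ∧ ∀ i, ∀ c ∈ D i, (fun b => φ (c (s b))) ∈ D (σ i) := by
  rw [twistedCyclic_iff_forall_componentCode θ φ s σ hσ, isSelfDual_iff_forall_componentCode Φ]
  constructor
  · rintro ⟨hcyc, hdual⟩
    exact ⟨componentCode Φ C, Set.ext fun a => mem_iff_forall_mem_componentCode Φ, hdual, hcyc⟩
  · rintro ⟨D, hC, hdual, hcyc⟩
    rw [componentCode_eq_of_coe_eq Φ hC]
    exact ⟨hcyc, hdual⟩

theorem stmt_18_general (p r k n : ℕ) [Fact p.Prime] [NeZero n]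
    (S : Finset (Fin k)) (π : Equiv.Perm (Fin k)) (t : ℕ)
    (σ : Equiv.Perm (Fin (2 ^ k)))
    (hσ : ∀ (a : B p r k) (i : Fin (2 ^ k)),
      Phi p r k (Th p r k S (Lam p r k π t a)) i = Phi p r k a (σ.symm i) ^ p ^ t)
    (C : Submodule (B p r k) (Fin n → B p r k)) :
    ((∀ c ∈ C, (fun b : Fin n => Th p r k S (Lam p r k π t (c (b - 1)))) ∈ C) ∧
        (C : Set (Fin n → B p r k)) =
          {b : Fin n → B p r k | ∀ c ∈ C, ∑ j, b j * c j = 0}) ↔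
      ∃ D : Fin (2 ^ k) → Submodule (GaloisField p r) (Fin n → GaloisField p r),
        (C : Set (Fin n → B p r k)) =
            {a | ∀ i : Fin (2 ^ k), (fun b => Phi p r k (a b) i) ∈ D i} ∧
        (∀ i : Fin (2 ^ k),
          (D i : Set (Fin n → GaloisField p r)) = {b | ∀ c ∈ D i, ∑ j, b j * c j = 0}) ∧
        ∀ i : Fin (2 ^ k), ∀ c ∈ D i,
          (fun b : Fin n => c (b - 1) ^ p ^ t) ∈ D (σ i) :=
  isSelfDual_twistedCyclic_iff_exists (RingEquiv.ofBijective _ (Phi_bijective p r k))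
    (fun a => Th p r k S (Lam p r k π t a)) (· ^ p ^ t) (· - 1) σ hσ C

/-- With `θ = Θ_S ∘ Λ_{π,t}` and `σ_θ` its induced coordinate permutation, a
`B_k`-submodule `C` of `B_k^n` is a Euclidean self-dual `θ`-cyclic code iff there are
Euclidean self-dual `F_{p^r}`-linear codes `C_1, …, C_{2^k}` with
`C = Ψ̄_k^{-1}(C_1, …, C_{2^k})` and `T_{φ^t}(C_i) ⊆ C_{σ_θ(i)}` for all `i`. -/
theorem stmt_18 (p r k n : ℕ) [Fact p.Prime] [NeZero n] (hr : 1 ≤ r)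
    (S : Finset (Fin k)) (π : Equiv.Perm (Fin k)) (t : ℕ) (ht : t < r)
    (σ : Equiv.Perm (Fin (2 ^ k)))
    (hσ : ∀ (a : B p r k) (i : Fin (2 ^ k)),
      Phi p r k (Th p r k S (Lam p r k π t a)) i = Phi p r k a (σ.symm i) ^ p ^ t)
    (C : Submodule (B p r k) (Fin n → B p r k)) :
    ((∀ c ∈ C, (fun b : Fin n => Th p r k S (Lam p r k π t (c (b - 1)))) ∈ C) ∧
        (C : Set (Fin n → B p r k)) =
          {b : Fin n → B p r k | ∀ c ∈ C, ∑ j, b j * c j = 0}) ↔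
      ∃ D : Fin (2 ^ k) → Submodule (GaloisField p r) (Fin n → GaloisField p r),
        (C : Set (Fin n → B p r k)) =
            {a | ∀ i : Fin (2 ^ k), (fun b => Phi p r k (a b) i) ∈ D i} ∧
        (∀ i : Fin (2 ^ k),
          (D i : Set (Fin n → GaloisField p r)) = {b | ∀ c ∈ D i, ∑ j, b j * c j = 0}) ∧
        ∀ i : Fin (2 ^ k), ∀ c ∈ D i,
          (fun b : Fin n => c (b - 1) ^ p ^ t) ∈ D (σ i) :=
  stmt_18_general p r k n S π t σ hσ C
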